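/- arXiv:1203.6234 — 7 statements merged into one kernel-verified Lean document; each statement's English description precedes it below -/
import Mathlib

section
/- Let q, h, a : ℝ → ℝ³ be maps and f : ℝ → ℝ a differentiable function with f(t) ≠ 0 for all t, satisfying the φ-parametrized Frenet equations q'(t) = h(t), h'(t) = −q(t) + f(t)·a(t), a'(t) = −f(t)·h(t) for all t (so that q is three times differentiable). Then the ruling q satisfies the third-order vector differential equation: for every t, d/dt[(1/f(t))·q''(t)] + ((1 + f(t)²)/f(t))·q'(t) − (f'(t)/f(t)²)·q(t) = 0. -/
open Real

/-- The ruling `q` of a ruled surface, in the φ-parametrization, satisfies a third-order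
vector differential equation:
`d/dt[(1/f) q''] + ((1 + f²)/f) q' − (f'/f²) q = 0`. -/
theorem ruling_third_order_ode
    (q h a : ℝ → EuclideanSpace ℝ (Fin 3)) (f : ℝ → ℝ)
    (hq : Differentiable ℝ q) (hh : Differentiable ℝ h) (ha : Differentiable ℝ a)
    (hfdiff : Differentiable ℝ f) (hf : ∀ t, f t ≠ 0)
    (hq' : ∀ t, deriv q t = h t)
    (hh' : ∀ t, deriv h t = -q t + f t • a t)
    (ha' : ∀ t, deriv a t = (-(f t)) • h t) :
    ∀ t, deriv (fun u => (f u)⁻¹ • deriv (deriv q) u) t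
        + ((1 + (f t) ^ 2) / f t) • deriv q t
        - (deriv f t / (f t) ^ 2) • q t = 0 := by
  intro t
  have hdq : deriv q = h := funext hq'
  have hgeq : (fun u => (f u)⁻¹ • deriv (deriv q) u)
      = fun u => a u - (f u)⁻¹ • q u := by
    funext u
    rw [hdq, hh' u]
    simp [smul_add, smul_smul, inv_mul_cancel₀ (hf u), smul_neg]
    abel
  have hfa : HasDerivAt f (deriv f t) t := (hfdiff t).hasDerivAt
  have hinv : HasDerivAt (fun u => (f u)⁻¹) (-deriv f t / f t ^ 2) t :=
    hfa.inv (hf t)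
  have hqa : HasDerivAt q (h t) t := by
    have := (hq t).hasDerivAt; rwa [hq' t] at this
  have haa : HasDerivAt a ((-(f t)) • h t) t := by
    have := (ha t).hasDerivAt; rwa [ha' t] at this
  have hsm : HasDerivAt (fun u => (f u)⁻¹ • q u)
      ((f t)⁻¹ • h t + (-deriv f t / f t ^ 2) • q t) t := hinv.smul hqa
  have hg : HasDerivAt (fun u => a u - (f u)⁻¹ • q u)
      ((-(f t)) • h t - ((f t)⁻¹ • h t + (-deriv f t / f t ^ 2) • q t)) t :=
    haa.sub hsm
  rw [hgeq, hg.deriv, hdq]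
  have hft := hf t
  match_scalars <;> field_simp <;> ring
end

section
/- Let (q_α, h_α) and (q_β, h_β) be differentiable maps ℝ → ℝ³, and let k₁^α, k₁^β : ℝ → ℝ be functions with k₁^α never zero, satisfying q_α'(t) = k₁^α(t)·h_α(t) and q_β'(s) = k₁^β(s)·h_β(s) for all t, s. Let φ : ℝ → ℝ be differentiable with φ'(s) = k₁^β(s)/k₁^α(φ(s)) for all s. If the central normals agree, h_α(φ(s)) = h_β(s) for all s, and the rulings agree at one point, q_α(φ(s₀)) = q_β(s₀) for some s₀, then the rulings agree everywhere: q_α(φ(s)) = q_β(s) for all s, i.e. the two ruled surfaces are similar under the variable transformation φ. -/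
/-!
Differentiating `qα ∘ φ` by the chain rule gives
`φ' • (k₁α ∘ φ) • (hα ∘ φ) = k₁β • hβ = qβ'`, since `φ' = k₁β / (k₁α ∘ φ)` and the central
normals agree. So `qα ∘ φ` and `qβ` have the same derivative everywhere, and agreeing at `s₀`
they agree on all of `ℝ`.
-/

section

variable {𝕜 E : Type*} [RCLike 𝕜] [NormedAddCommGroup E] [NormedSpace 𝕜 E]

theorem eq_of_hasDerivAt_eq {f g f' : 𝕜 → E} (hf : ∀ x, HasDerivAt f (f' x) x)
    (hg : ∀ x, HasDerivAt g (f' x) x) {x₀ : 𝕜} (h₀ : f x₀ = g x₀) : f = g :=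
  eq_of_fderiv_eq (fun x ↦ (hf x).differentiableAt) (fun x ↦ (hg x).differentiableAt)
    (fun x ↦ by rw [(hf x).hasFDerivAt.fderiv, (hg x).hasFDerivAt.fderiv]) x₀ h₀

theorem hasDerivAt_comp_of_deriv_eq_div {q h : 𝕜 → E} {k m φ : 𝕜 → 𝕜} {s : 𝕜}
    (hq : DifferentiableAt 𝕜 q (φ s)) (hq' : deriv q (φ s) = k (φ s) • h (φ s))
    (hφ : DifferentiableAt 𝕜 φ s) (hφ' : deriv φ s = m s / k (φ s)) (hk : k (φ s) ≠ 0) :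
    HasDerivAt (q ∘ φ) (m s • h (φ s)) s := by
  have hcomp := (hq' ▸ hq.hasDerivAt).scomp s (hφ' ▸ hφ.hasDerivAt)
  rwa [smul_smul, div_mul_cancel₀ _ hk] at hcomp

end

theorem central_normals_agree_implies_similar_general
    (qα hα qβ hβ : ℝ → EuclideanSpace ℝ (Fin 3)) (k₁α k₁β : ℝ → ℝ)
    (hqα : Differentiable ℝ qα)
    (hqβ : Differentiable ℝ qβ)
    (hk₁α : ∀ t, k₁α t ≠ 0)
    (hqα' : ∀ t, deriv qα t = k₁α t • hα t)
    (hqβ' : ∀ s, deriv qβ s = k₁β s • hβ s)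
    (φ : ℝ → ℝ) (hφ : Differentiable ℝ φ)
    (hφ' : ∀ s, deriv φ s = k₁β s / k₁α (φ s))
    (hnormals : ∀ s, hα (φ s) = hβ s)
    (s₀ : ℝ) (h₀ : qα (φ s₀) = qβ s₀) :
    ∀ s, qα (φ s) = qβ s := by
  have hα_deriv (s : ℝ) : HasDerivAt (qα ∘ φ) (k₁β s • hβ s) s := by
    rw [← hnormals s]
    exact hasDerivAt_comp_of_deriv_eq_div (hqα _) (hqα' _) (hφ s) (hφ' s) (hk₁α _)
  have hβ_deriv (s : ℝ) : HasDerivAt qβ (k₁β s • hβ s) s := hqβ' s ▸ (hqβ s).hasDerivAt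
  exact congrFun (eq_of_hasDerivAt_eq hα_deriv hβ_deriv h₀)

/-- If the central normals of two ruled surfaces agree under a variable transformation φ
with `φ' = k₁^β / (k₁^α ∘ φ)`, and the rulings agree at one point, then the rulings agree
everywhere: the surfaces are similar ruled surfaces under φ. -/
theorem central_normals_agree_implies_similar
    (qα hα qβ hβ : ℝ → EuclideanSpace ℝ (Fin 3)) (k₁α k₁β : ℝ → ℝ)
    (hqα : Differentiable ℝ qα) (hhα : Differentiable ℝ hα)
    (hqβ : Differentiable ℝ qβ) (hhβ : Differentiable ℝ hβ)
    (hk₁α : ∀ t, k₁α t ≠ 0)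
    (hqα' : ∀ t, deriv qα t = k₁α t • hα t)
    (hqβ' : ∀ s, deriv qβ s = k₁β s • hβ s)
    (φ : ℝ → ℝ) (hφ : Differentiable ℝ φ)
    (hφ' : ∀ s, deriv φ s = k₁β s / k₁α (φ s))
    (hnormals : ∀ s, hα (φ s) = hβ s)
    (s₀ : ℝ) (h₀ : qα (φ s₀) = qβ s₀) :
    ∀ s, qα (φ s) = qβ s :=
  central_normals_agree_implies_similar_general qα hα qβ hβ k₁α k₁β hqα hqβ hk₁α hqα' hqβ' φ hφ hφ'
    hnormals s₀ h₀
end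

section
/- Let (q_α, h_α, a_α, k₁^α, k₂^α) and (q_β, h_β, a_β, k₁^β, k₂^β) be two ruled-surface Frenet frames: q, h, a : ℝ → ℝ³ differentiable with ‖q‖ = ‖h‖ = 1, a = q × h, and q' = k₁ h, h' = −k₁ q + k₂ a, a' = −k₂ h, where k₁^α, k₁^β are positive. Let φ : ℝ → ℝ be differentiable with φ'(s) > 0 for all s, and suppose q_α(φ(s)) = q_β(s) for all s (the surfaces are similar). Then the asymptotic normals agree, a_α(φ(s)) = a_β(s) for all s; moreover, for every s with k₂^α(φ(s)) ≠ 0, the transformation satisfies φ'(s) = k₂^β(s)/k₂^α(φ(s)). -/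
/-!
Differentiating `q_α ∘ φ = q_β` gives `φ' k₁^α(φ) h_α(φ) = k₁^β h_β`; both sides are positive
multiples of unit vectors, so `h_α ∘ φ = h_β` and `φ' k₁^α(φ) = k₁^β`, whence `a_α ∘ φ = a_β`.
Differentiating `h_α ∘ φ = h_β` and cancelling the `q_β`-terms with the previous identity
leaves `φ' k₂^α(φ) a_β = k₂^β a_β`, and `a_β` is a unit vector.
-/

open Real

/-- Cross product on `EuclideanSpace ℝ (Fin 3)`. -/
noncomputable def cross3 (u v : EuclideanSpace ℝ (Fin 3)) : EuclideanSpace ℝ (Fin 3) :=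
  WithLp.toLp 2 (crossProduct u v)

open scoped RealInnerProductSpace

theorem inner_deriv_eq_zero_of_norm_eq_const {F : Type*} [NormedAddCommGroup F]
    [InnerProductSpace ℝ F] {q : ℝ → F} {r s : ℝ} (hq : DifferentiableAt ℝ q s)
    (hn : ∀ t, ‖q t‖ = r) : ⟪q s, deriv q s⟫ = 0 := by
  have h := hq.hasDerivAt.norm_sq
  simp only [hn] at h
  simpa using h.unique (hasDerivAt_const s (r ^ 2))

theorem inner_eq_zero_of_deriv_eq_smul {F : Type*} [NormedAddCommGroup F]
    [InnerProductSpace ℝ F] {q h : ℝ → F} {k r s : ℝ} (hq : DifferentiableAt ℝ q s)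
    (hn : ∀ t, ‖q t‖ = r) (hq' : deriv q s = k • h s) (hk : k ≠ 0) : ⟪q s, h s⟫ = 0 := by
  have h0 := inner_deriv_eq_zero_of_norm_eq_const hq hn
  rw [hq', real_inner_smul_right] at h0
  exact (mul_eq_zero.1 h0).resolve_left hk

theorem norm_cross3_of_orthonormal {u v : EuclideanSpace ℝ (Fin 3)} (hu : ‖u‖ = 1)
    (hv : ‖v‖ = 1) (huv : ⟪u, v⟫ = 0) : ‖cross3 u v‖ = 1 := by
  rw [cross3, InnerProductGeometry.norm_ofLp_crossProduct,
    (InnerProductGeometry.inner_eq_zero_iff_angle_eq_pi_div_two u v).1 huv, hu, hv]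
  simp

theorem eq_and_eq_of_pos_smul_eq_pos_smul {E : Type*} [NormedAddCommGroup E] [NormedSpace ℝ E]
    {a b : ℝ} {x y : E} (ha : 0 < a) (hb : 0 < b) (hx : ‖x‖ = 1) (hy : ‖y‖ = 1)
    (h : a • x = b • y) : a = b ∧ x = y := by
  have hab : a = b := by
    simpa [norm_smul, hx, hy, abs_of_pos ha, abs_of_pos hb] using congrArg norm h
  subst hab
  exact ⟨rfl, smul_right_injective E ha.ne' h⟩

theorem deriv_eq_smul_deriv_of_comp_eq {E : Type*} [NormedAddCommGroup E] [NormedSpace ℝ E]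
    {f g : ℝ → E} {φ : ℝ → ℝ} (h : ∀ s, f (φ s) = g s) {s : ℝ}
    (hf : DifferentiableAt ℝ f (φ s)) (hφ : DifferentiableAt ℝ φ s) :
    deriv g s = deriv φ s • deriv f (φ s) := by
  rw [← funext h]
  exact deriv.scomp s hf hφ

theorem similar_ruled_surfaces_asymptotic_normals_agree_general
    (qα hα aα qβ hβ aβ : ℝ → EuclideanSpace ℝ (Fin 3)) (k₁α k₂α k₁β k₂β : ℝ → ℝ)
    (hqα : Differentiable ℝ qα) (hhα : Differentiable ℝ hα)
    (hqβ : Differentiable ℝ qβ)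
    (hhαn : ∀ t, ‖hα t‖ = 1)
    (hqβn : ∀ s, ‖qβ s‖ = 1) (hhβn : ∀ s, ‖hβ s‖ = 1)
    (haαdef : ∀ t, aα t = cross3 (qα t) (hα t))
    (haβdef : ∀ s, aβ s = cross3 (qβ s) (hβ s))
    (hqα' : ∀ t, deriv qα t = k₁α t • hα t)
    (hhα' : ∀ t, deriv hα t = (-(k₁α t)) • qα t + k₂α t • aα t)
    (hqβ' : ∀ s, deriv qβ s = k₁β s • hβ s)
    (hhβ' : ∀ s, deriv hβ s = (-(k₁β s)) • qβ s + k₂β s • aβ s)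
    (hk₁α : ∀ t, 0 < k₁α t) (hk₁β : ∀ s, 0 < k₁β s)
    (φ : ℝ → ℝ) (hφ : Differentiable ℝ φ) (hφ' : ∀ s, 0 < deriv φ s)
    (hsim : ∀ s, qα (φ s) = qβ s) :
    (∀ s, aα (φ s) = aβ s) ∧
      (∀ s, k₂α (φ s) ≠ 0 → deriv φ s = k₂β s / k₂α (φ s)) := by
  have hk₁ (s : ℝ) : deriv φ s * k₁α (φ s) = k₁β s ∧ hα (φ s) = hβ s := by
    have hq := deriv_eq_smul_deriv_of_comp_eq hsim (hqα _) (hφ s)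
    rw [hqβ', hqα', smul_smul] at hq
    exact eq_and_eq_of_pos_smul_eq_pos_smul (mul_pos (hφ' s) (hk₁α _)) (hk₁β s) (hhαn _) (hhβn s)
      hq.symm
  have ha (s : ℝ) : aα (φ s) = aβ s := by rw [haαdef, haβdef, hsim, (hk₁ s).2]
  refine ⟨ha, fun s hk₂ => ?_⟩
  have hh := deriv_eq_smul_deriv_of_comp_eq (fun s => (hk₁ s).2) (hhα _) (hφ s)
  rw [hhβ', hhα', hsim, ha, ← (hk₁ s).1] at hh
  have haβ : aβ s ≠ 0 := by
    rw [← norm_ne_zero_iff, haβdef, norm_cross3_of_orthonormal (hqβn s) (hhβn s)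
      (inner_eq_zero_of_deriv_eq_smul (hqβ s) hqβn (hqβ' s) (hk₁β s).ne')]
    exact one_ne_zero
  have hk₂β : k₂β s = deriv φ s * k₂α (φ s) :=
    smul_left_injective ℝ haβ (by linear_combination (norm := module) hh)
  rw [hk₂β, mul_div_cancel_right₀ _ hk₂]

/-- If two ruled surfaces are similar under a variable transformation φ, then their
asymptotic normals agree, and wherever `k₂^α ∘ φ ≠ 0` the transformation satisfies
`φ' = k₂^β / (k₂^α ∘ φ)`. -/
theorem similar_ruled_surfaces_asymptotic_normals_agree
    (qα hα aα qβ hβ aβ : ℝ → EuclideanSpace ℝ (Fin 3)) (k₁α k₂α k₁β k₂β : ℝ → ℝ)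
    (hqα : Differentiable ℝ qα) (hhα : Differentiable ℝ hα) (haα : Differentiable ℝ aα)
    (hqβ : Differentiable ℝ qβ) (hhβ : Differentiable ℝ hβ) (haβ : Differentiable ℝ aβ)
    (hqαn : ∀ t, ‖qα t‖ = 1) (hhαn : ∀ t, ‖hα t‖ = 1)
    (hqβn : ∀ s, ‖qβ s‖ = 1) (hhβn : ∀ s, ‖hβ s‖ = 1)
    (haαdef : ∀ t, aα t = cross3 (qα t) (hα t))
    (haβdef : ∀ s, aβ s = cross3 (qβ s) (hβ s))
    (hqα' : ∀ t, deriv qα t = k₁α t • hα t)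
    (hhα' : ∀ t, deriv hα t = (-(k₁α t)) • qα t + k₂α t • aα t)
    (haα' : ∀ t, deriv aα t = (-(k₂α t)) • hα t)
    (hqβ' : ∀ s, deriv qβ s = k₁β s • hβ s)
    (hhβ' : ∀ s, deriv hβ s = (-(k₁β s)) • qβ s + k₂β s • aβ s)
    (haβ' : ∀ s, deriv aβ s = (-(k₂β s)) • hβ s)
    (hk₁α : ∀ t, 0 < k₁α t) (hk₁β : ∀ s, 0 < k₁β s)
    (φ : ℝ → ℝ) (hφ : Differentiable ℝ φ) (hφ' : ∀ s, 0 < deriv φ s)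
    (hsim : ∀ s, qα (φ s) = qβ s) :
    (∀ s, aα (φ s) = aβ s) ∧
      (∀ s, k₂α (φ s) ≠ 0 → deriv φ s = k₂β s / k₂α (φ s)) :=
  similar_ruled_surfaces_asymptotic_normals_agree_general qα hα aα qβ hβ aβ k₁α k₂α k₁β k₂β hqα hhα
    hqβ hhαn hqβn hhβn haαdef haβdef hqα' hhα' hqβ' hhβ' hk₁α hk₁β φ hφ hφ' hsim
end

section
/- Let (q_α, h_α, a_α) and (q_β, h_β, a_β) be differentiable maps ℝ → ℝ³ with q_α = h_α × a_α and q_β = h_β × a_β, and let k₂^α, k₂^β : ℝ → ℝ be functions with a_α'(t) = −k₂^α(t)·h_α(t) and a_β'(s) = −k₂^β(s)·h_β(s), where k₂^α is never zero and k₂^β(s) ≠ 0 for all s. Let φ : ℝ → ℝ be differentiable with φ'(s) = k₂^β(s)/k₂^α(φ(s)) for all s. If the asymptotic normals agree, a_α(φ(s)) = a_β(s) for all s, then the central normals agree, h_α(φ(s)) = h_β(s) for all s, and the rulings agree, q_α(φ(s)) = q_β(s) for all s; i.e. the two ruled surfaces are similar under the variable transformation φ. -/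
/-! Differentiating `a_α ∘ φ = a_β` gives `φ' k₂^α(φ) h_α(φ) = k₂^β h_β`, and the
prescribed `φ' = k₂^β / k₂^α(φ)` cancels the curvatures, so `h_α ∘ φ = h_β`; the rulings are then
cross products of agreeing vectors. -/

open Filter Topology

theorem eq_of_deriv_comp_eq_smul {𝕜 E : Type*} [NontriviallyNormedField 𝕜]
    [NormedAddCommGroup E] [NormedSpace 𝕜 E] {f g : 𝕜 → E} {φ : 𝕜 → 𝕜} {s c d : 𝕜} {u v : E}
    (hf : DifferentiableAt 𝕜 f (φ s)) (hφ : DifferentiableAt 𝕜 φ s) (hfg : f ∘ φ =ᶠ[𝓝 s] g)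
    (hf' : deriv f (φ s) = c • u) (hg' : deriv g s = d • v) (hφ' : deriv φ s * c = d)
    (hd : d ≠ 0) : u = v := by
  have hchain : d • u = d • v := by
    rw [← hg', ← hfg.deriv_eq, deriv.scomp s hf hφ, hf', smul_smul, hφ']
  exact smul_right_injective E hd hchain

theorem asymptotic_normals_agree_implies_similar_general
    (qα hα aα qβ hβ aβ : ℝ → EuclideanSpace ℝ (Fin 3)) (k₂α k₂β : ℝ → ℝ)
    (haα : Differentiable ℝ aα)
    (hqαdef : ∀ t, qα t = cross3 (hα t) (aα t))
    (hqβdef : ∀ s, qβ s = cross3 (hβ s) (aβ s))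
    (haα' : ∀ t, deriv aα t = (-(k₂α t)) • hα t)
    (haβ' : ∀ s, deriv aβ s = (-(k₂β s)) • hβ s)
    (hk₂α : ∀ t, k₂α t ≠ 0) (hk₂β : ∀ s, k₂β s ≠ 0)
    (φ : ℝ → ℝ) (hφ : Differentiable ℝ φ)
    (hφ' : ∀ s, deriv φ s = k₂β s / k₂α (φ s))
    (hasym : ∀ s, aα (φ s) = aβ s) :
    (∀ s, hα (φ s) = hβ s) ∧ (∀ s, qα (φ s) = qβ s) := by
  have hcentral (s : ℝ) : hα (φ s) = hβ s := by
    refine eq_of_deriv_comp_eq_smul (haα _) (hφ s) (.of_eq (funext hasym)) (haα' _) (haβ' s)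
      ?_ (neg_ne_zero.mpr (hk₂β s))
    rw [hφ', mul_neg, div_mul_cancel₀ _ (hk₂α _)]
  exact ⟨hcentral, fun s => by rw [hqαdef, hqβdef, hcentral, hasym]⟩

/-- If the asymptotic normals of two ruled surfaces agree under a variable
transformation φ with `φ' = k₂^β / (k₂^α ∘ φ)`, then the central normals agree and the
rulings agree: the surfaces are similar ruled surfaces under φ. -/
theorem asymptotic_normals_agree_implies_similar
    (qα hα aα qβ hβ aβ : ℝ → EuclideanSpace ℝ (Fin 3)) (k₂α k₂β : ℝ → ℝ)
    (hqα : Differentiable ℝ qα) (hhα : Differentiable ℝ hα) (haα : Differentiable ℝ aα)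
    (hqβ : Differentiable ℝ qβ) (hhβ : Differentiable ℝ hβ) (haβ : Differentiable ℝ aβ)
    (hqαdef : ∀ t, qα t = cross3 (hα t) (aα t))
    (hqβdef : ∀ s, qβ s = cross3 (hβ s) (aβ s))
    (haα' : ∀ t, deriv aα t = (-(k₂α t)) • hα t)
    (haβ' : ∀ s, deriv aβ s = (-(k₂β s)) • hβ s)
    (hk₂α : ∀ t, k₂α t ≠ 0) (hk₂β : ∀ s, k₂β s ≠ 0)
    (φ : ℝ → ℝ) (hφ : Differentiable ℝ φ)
    (hφ' : ∀ s, deriv φ s = k₂β s / k₂α (φ s))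
    (hasym : ∀ s, aα (φ s) = aβ s) :
    (∀ s, hα (φ s) = hβ s) ∧ (∀ s, qα (φ s) = qβ s) :=
  asymptotic_normals_agree_implies_similar_general qα hα aα qβ hβ aβ k₂α k₂β haα hqαdef hqβdef haα'
    haβ' hk₂α hk₂β φ hφ hφ' hasym
end

section
/- Let (q_α, h_α, a_α, k₁^α, k₂^α) and (q_β, h_β, a_β, k₁^β, k₂^β) be two ruled-surface Frenet frames: q, h, a : ℝ → ℝ³ differentiable with ‖q‖ = ‖h‖ = 1, a = q × h, and q' = k₁ h, h' = −k₁ q + k₂ a, a' = −k₂ h, where k₁^α, k₁^β are positive. Let φ : ℝ → ℝ be differentiable with φ'(s) > 0 for all s, and suppose q_α(φ(s)) = q_β(s) for all s (the surfaces are similar). Then the ratios of curvatures agree, k₂^β(s)/k₁^β(s) = k₂^α(φ(s))/k₁^α(φ(s)) for all s, and the transformation keeps total curvatures equal in the sense that k₁^α(φ(s))·φ'(s) = k₁^β(s) for all s. -/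
/-!
Differentiating `q_α ∘ φ = q_β` gives `(φ' · k₁^α ∘ φ) h_α ∘ φ = k₁^β h_β`; since both `h` are unit
vectors and both coefficients are positive, `φ' · k₁^α ∘ φ = k₁^β` and `h_α ∘ φ = h_β`, hence also
`a_α ∘ φ = a_β`. Differentiating `h_α ∘ φ = h_β` then leaves `(φ' · k₂^α ∘ φ) a_β = k₂^β a_β`, and
`a_β = q_β × h_β` is a unit vector because `q_β ⊥ h_β`, so `φ' · k₂^α ∘ φ = k₂^β`. Dividing the
two relations cancels `φ'`.
-/

open Real
open scoped InnerProductSpace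

open InnerProductGeometry in
theorem norm_cross3_of_inner_eq_zero {u v : EuclideanSpace ℝ (Fin 3)} (h : ⟪u, v⟫_ℝ = 0) :
    ‖cross3 u v‖ = ‖u‖ * ‖v‖ := by
  rw [cross3, norm_ofLp_crossProduct, (inner_eq_zero_iff_angle_eq_pi_div_two u v).mp h,
    sin_pi_div_two, mul_one]

theorem HasDerivAt.inner_eq_zero_of_norm_eq_const {F : Type*} [NormedAddCommGroup F]
    [InnerProductSpace ℝ F] {f : ℝ → F} {f' : F} {x c : ℝ} (hf : HasDerivAt f f' x)
    (hc : ∀ t, ‖f t‖ = c) : ⟪f x, f'⟫_ℝ = 0 := by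
  have hconst : HasDerivAt (‖f ·‖ ^ 2) 0 x := by
    simpa only [hc] using hasDerivAt_const x (c ^ 2)
  simpa using hf.norm_sq.unique hconst

theorem eq_and_eq_of_smul_eq_smul_of_norm_eq_one {E : Type*} [NormedAddCommGroup E]
    [NormedSpace ℝ E] {c d : ℝ} {u v : E} (hc : 0 ≤ c) (hd : 0 < d) (hu : ‖u‖ = 1)
    (hv : ‖v‖ = 1) (h : c • u = d • v) : c = d ∧ u = v := by
  have hcd : c = d := by
    simpa [norm_smul, hu, hv, abs_of_nonneg hc, abs_of_pos hd] using congrArg norm h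
  exact ⟨hcd, smul_right_injective E hd.ne' (hcd ▸ h)⟩

theorem deriv_eq_deriv_smul_deriv_of_comp_eq {E : Type*} [NormedAddCommGroup E]
    [NormedSpace ℝ E] {f g : ℝ → E} {φ : ℝ → ℝ} {s : ℝ} (hfg : ∀ t, f (φ t) = g t)
    (hf : DifferentiableAt ℝ f (φ s)) (hφ : DifferentiableAt ℝ φ s) :
    deriv g s = deriv φ s • deriv f (φ s) := by
  rw [← funext hfg]
  exact deriv.scomp s hf hφ

theorem similar_ruled_surfaces_curvature_ratios_agree_general
    (qα hα aα qβ hβ aβ : ℝ → EuclideanSpace ℝ (Fin 3)) (k₁α k₂α k₁β k₂β : ℝ → ℝ)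
    (hqα : Differentiable ℝ qα) (hhα : Differentiable ℝ hα)
    (hqβ : Differentiable ℝ qβ)
    (hhαn : ∀ t, ‖hα t‖ = 1)
    (hqβn : ∀ s, ‖qβ s‖ = 1) (hhβn : ∀ s, ‖hβ s‖ = 1)
    (haαdef : ∀ t, aα t = cross3 (qα t) (hα t))
    (haβdef : ∀ s, aβ s = cross3 (qβ s) (hβ s))
    (hqα' : ∀ t, deriv qα t = k₁α t • hα t)
    (hhα' : ∀ t, deriv hα t = (-(k₁α t)) • qα t + k₂α t • aα t)
    (hqβ' : ∀ s, deriv qβ s = k₁β s • hβ s)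
    (hhβ' : ∀ s, deriv hβ s = (-(k₁β s)) • qβ s + k₂β s • aβ s)
    (hk₁α : ∀ t, 0 < k₁α t) (hk₁β : ∀ s, 0 < k₁β s)
    (φ : ℝ → ℝ) (hφ : Differentiable ℝ φ) (hφ' : ∀ s, 0 < deriv φ s)
    (hsim : ∀ s, qα (φ s) = qβ s) :
    (∀ s, k₂β s / k₁β s = k₂α (φ s) / k₁α (φ s)) ∧
      (∀ s, k₁α (φ s) * deriv φ s = k₁β s) := by
  have hk₁ (s : ℝ) : deriv φ s * k₁α (φ s) = k₁β s ∧ hα (φ s) = hβ s := by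
    refine eq_and_eq_of_smul_eq_smul_of_norm_eq_one (mul_pos (hφ' s) (hk₁α _)).le (hk₁β s)
      (hhαn _) (hhβn s) ?_
    rw [mul_smul, ← hqα', ← hqβ', deriv_eq_deriv_smul_deriv_of_comp_eq hsim (hqα _) (hφ s)]
  have ha (s : ℝ) : aα (φ s) = aβ s := by rw [haαdef, haβdef, hsim, (hk₁ s).2]
  have hqβ_hβ (s : ℝ) : ⟪qβ s, hβ s⟫_ℝ = 0 := by
    have h := (hqβ s).hasDerivAt.inner_eq_zero_of_norm_eq_const hqβn
    rwa [hqβ', inner_smul_right, mul_eq_zero, or_iff_right (hk₁β s).ne'] at h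
  have haβ_ne (s : ℝ) : aβ s ≠ 0 := by
    rw [← norm_ne_zero_iff, haβdef, norm_cross3_of_inner_eq_zero (hqβ_hβ s), hqβn, hhβn]
    norm_num
  have hk₂ (s : ℝ) : deriv φ s * k₂α (φ s) = k₂β s := by
    have h := deriv_eq_deriv_smul_deriv_of_comp_eq (fun t ↦ (hk₁ t).2) (hhα _) (hφ s)
    rw [hhβ', hhα', hsim, ha, smul_add, smul_smul, smul_smul, mul_neg, (hk₁ s).1] at h
    exact smul_left_injective ℝ (haβ_ne s) (add_left_cancel h).symm
  refine ⟨fun s ↦ ?_, fun s ↦ mul_comm (k₁α (φ s)) _ ▸ (hk₁ s).1⟩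
  rw [← (hk₁ s).1, ← hk₂ s, mul_div_mul_left _ _ (hφ' s).ne']

/-- If two ruled surfaces are similar under a variable transformation φ, then the ratios
of their curvatures agree, `k₂^β/k₁^β = (k₂^α ∘ φ)/(k₁^α ∘ φ)`, and the transformation
keeps total curvatures equal: `(k₁^α ∘ φ) · φ' = k₁^β`. -/
theorem similar_ruled_surfaces_curvature_ratios_agree
    (qα hα aα qβ hβ aβ : ℝ → EuclideanSpace ℝ (Fin 3)) (k₁α k₂α k₁β k₂β : ℝ → ℝ)
    (hqα : Differentiable ℝ qα) (hhα : Differentiable ℝ hα) (haα : Differentiable ℝ aα)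
    (hqβ : Differentiable ℝ qβ) (hhβ : Differentiable ℝ hβ) (haβ : Differentiable ℝ aβ)
    (hqαn : ∀ t, ‖qα t‖ = 1) (hhαn : ∀ t, ‖hα t‖ = 1)
    (hqβn : ∀ s, ‖qβ s‖ = 1) (hhβn : ∀ s, ‖hβ s‖ = 1)
    (haαdef : ∀ t, aα t = cross3 (qα t) (hα t))
    (haβdef : ∀ s, aβ s = cross3 (qβ s) (hβ s))
    (hqα' : ∀ t, deriv qα t = k₁α t • hα t)
    (hhα' : ∀ t, deriv hα t = (-(k₁α t)) • qα t + k₂α t • aα t)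
    (haα' : ∀ t, deriv aα t = (-(k₂α t)) • hα t)
    (hqβ' : ∀ s, deriv qβ s = k₁β s • hβ s)
    (hhβ' : ∀ s, deriv hβ s = (-(k₁β s)) • qβ s + k₂β s • aβ s)
    (haβ' : ∀ s, deriv aβ s = (-(k₂β s)) • hβ s)
    (hk₁α : ∀ t, 0 < k₁α t) (hk₁β : ∀ s, 0 < k₁β s)
    (φ : ℝ → ℝ) (hφ : Differentiable ℝ φ) (hφ' : ∀ s, 0 < deriv φ s)
    (hsim : ∀ s, qα (φ s) = qβ s) :
    (∀ s, k₂β s / k₁β s = k₂α (φ s) / k₁α (φ s)) ∧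
      (∀ s, k₁α (φ s) * deriv φ s = k₁β s) :=
  similar_ruled_surfaces_curvature_ratios_agree_general qα hα aα qβ hβ aβ k₁α k₂α k₁β k₂β hqα hhα
    hqβ hhαn hqβn hhβn haαdef haβdef hqα' hhα' hqβ' hhβ' hk₁α hk₁β φ hφ hφ' hsim
end

section
/- Let (q_α, h_α, a_α, k₁^α, k₂^α) and (q_β, h_β, a_β, k₁^β, k₂^β) be two ruled-surface Frenet frames: q, h, a : ℝ → ℝ³ differentiable, q' = k₁ h, h' = −k₁ q + k₂ a, a' = −k₂ h, with k₁^α, k₁^β positive and all curvatures continuous. Let φ : ℝ → ℝ be differentiable with k₁^α(φ(s))·φ'(s) = k₁^β(s) for all s (equal total curvatures), and suppose the ratios of curvatures agree: k₂^β(s)/k₁^β(s) = k₂^α(φ(s))/k₁^α(φ(s)) for all s. If the frames agree at one point, q_α(φ(s₀)) = q_β(s₀), h_α(φ(s₀)) = h_β(s₀), a_α(φ(s₀)) = a_β(s₀) for some s₀, then q_α(φ(s)) = q_β(s) for all s; i.e. the two ruled surfaces are similar under the variable transformation φ. -/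
open Real

/-!
The differences `qα ∘ φ - qβ`, `hα ∘ φ - hβ`, `aα ∘ φ - aβ` satisfy the Frenet equations of the
`β`-frame, because the two hypotheses on the curvatures say exactly that the reparametrised
`α`-frame has the curvatures `k₁β`, `k₂β`. The Frenet equations are skew-symmetric, so
`‖q‖² + ‖h‖² + ‖a‖²` is constant along any solution; it vanishes for the differences at `s₀`,
hence everywhere.
-/

structure IsRuledFrenetFrame {E : Type*} [NormedAddCommGroup E] [NormedSpace ℝ E]
    (q h a : ℝ → E) (k₁ k₂ : ℝ → ℝ) : Prop where
  hasDerivAt_q : ∀ t, HasDerivAt q (k₁ t • h t) t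
  hasDerivAt_h : ∀ t, HasDerivAt h (-k₁ t • q t + k₂ t • a t) t
  hasDerivAt_a : ∀ t, HasDerivAt a (-k₂ t • h t) t

namespace IsRuledFrenetFrame

section NormedSpace

variable {E : Type*} [NormedAddCommGroup E] [NormedSpace ℝ E]
  {q h a q' h' a' : ℝ → E} {k₁ k₂ : ℝ → ℝ}

theorem of_deriv (hq : Differentiable ℝ q) (hh : Differentiable ℝ h) (ha : Differentiable ℝ a)
    (hq' : ∀ t, deriv q t = k₁ t • h t) (hh' : ∀ t, deriv h t = -k₁ t • q t + k₂ t • a t)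
    (ha' : ∀ t, deriv a t = -k₂ t • h t) : IsRuledFrenetFrame q h a k₁ k₂ where
  hasDerivAt_q t := hq' t ▸ (hq t).hasDerivAt
  hasDerivAt_h t := hh' t ▸ (hh t).hasDerivAt
  hasDerivAt_a t := ha' t ▸ (ha t).hasDerivAt

theorem comp (F : IsRuledFrenetFrame q h a k₁ k₂) {φ : ℝ → ℝ} (hφ : Differentiable ℝ φ) :
    IsRuledFrenetFrame (q ∘ φ) (h ∘ φ) (a ∘ φ)
      (fun s ↦ k₁ (φ s) * deriv φ s) (fun s ↦ k₂ (φ s) * deriv φ s) where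
  hasDerivAt_q s := by
    convert (F.hasDerivAt_q (φ s)).scomp s (hφ s).hasDerivAt using 1
    simp only [Function.comp_apply]
    module
  hasDerivAt_h s := by
    convert (F.hasDerivAt_h (φ s)).scomp s (hφ s).hasDerivAt using 1
    simp only [Function.comp_apply]
    module
  hasDerivAt_a s := by
    convert (F.hasDerivAt_a (φ s)).scomp s (hφ s).hasDerivAt using 1
    simp only [Function.comp_apply]
    module

theorem sub (F : IsRuledFrenetFrame q h a k₁ k₂) (F' : IsRuledFrenetFrame q' h' a' k₁ k₂) :
    IsRuledFrenetFrame (q - q') (h - h') (a - a') k₁ k₂ where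
  hasDerivAt_q t := by
    convert (F.hasDerivAt_q t).sub (F'.hasDerivAt_q t) using 1
    simp only [Pi.sub_apply, smul_sub]
  hasDerivAt_h t := by
    convert (F.hasDerivAt_h t).sub (F'.hasDerivAt_h t) using 1
    simp only [Pi.sub_apply]
    module
  hasDerivAt_a t := by
    convert (F.hasDerivAt_a t).sub (F'.hasDerivAt_a t) using 1
    simp only [Pi.sub_apply, smul_sub]

end NormedSpace

section InnerProductSpace

variable {E : Type*} [NormedAddCommGroup E] [InnerProductSpace ℝ E]
  {q h a q' h' a' : ℝ → E} {k₁ k₂ : ℝ → ℝ}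

theorem hasDerivAt_sum_norm_sq (F : IsRuledFrenetFrame q h a k₁ k₂) (t : ℝ) :
    HasDerivAt (fun t ↦ ‖q t‖ ^ 2 + ‖h t‖ ^ 2 + ‖a t‖ ^ 2) 0 t := by
  refine (((F.hasDerivAt_q t).norm_sq.add (F.hasDerivAt_h t).norm_sq).add
    (F.hasDerivAt_a t).norm_sq).congr_deriv ?_
  simp only [real_inner_smul_right, inner_add_right, real_inner_comm (q t) (h t),
    real_inner_comm (h t) (a t)]
  ring

theorem q_eq_zero_of_eq_zero_at (F : IsRuledFrenetFrame q h a k₁ k₂) {t₀ : ℝ} (hq₀ : q t₀ = 0)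
    (hh₀ : h t₀ = 0) (ha₀ : a t₀ = 0) (t : ℝ) : q t = 0 := by
  have hconst := is_const_of_deriv_eq_zero (fun t ↦ (F.hasDerivAt_sum_norm_sq t).differentiableAt)
    (fun t ↦ (F.hasDerivAt_sum_norm_sq t).deriv) t t₀
  simp only [hq₀, hh₀, ha₀, norm_zero] at hconst
  have : ‖q t‖ ^ 2 = 0 := by nlinarith [sq_nonneg ‖q t‖, sq_nonneg ‖h t‖, sq_nonneg ‖a t‖]
  simpa using this

theorem q_eq_of_eq_at (F : IsRuledFrenetFrame q h a k₁ k₂)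
    (F' : IsRuledFrenetFrame q' h' a' k₁ k₂) {t₀ : ℝ} (hq₀ : q t₀ = q' t₀) (hh₀ : h t₀ = h' t₀)
    (ha₀ : a t₀ = a' t₀) (t : ℝ) :
    q t = q' t :=
  sub_eq_zero.mp <| (F.sub F').q_eq_zero_of_eq_zero_at (sub_eq_zero.mpr hq₀)
    (sub_eq_zero.mpr hh₀) (sub_eq_zero.mpr ha₀) t

end InnerProductSpace

end IsRuledFrenetFrame

theorem mul_eq_of_div_eq_div_of_mul_eq {a b c d e : ℝ} (hb : b ≠ 0) (hab : a * d = b)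
    (hdiv : c / b = e / a) : e * d = c := by
  have ha : a ≠ 0 := by rintro rfl; simp [← hab] at hb
  rw [div_eq_div_iff hb ha] at hdiv
  apply mul_left_cancel₀ ha
  linear_combination hab * e - hdiv

theorem equal_curvature_ratios_implies_similar_general
    (qα hα aα qβ hβ aβ : ℝ → EuclideanSpace ℝ (Fin 3)) (k₁α k₂α k₁β k₂β : ℝ → ℝ)
    (hqα : Differentiable ℝ qα) (hhα : Differentiable ℝ hα) (haα : Differentiable ℝ aα)
    (hqβ : Differentiable ℝ qβ) (hhβ : Differentiable ℝ hβ) (haβ : Differentiable ℝ aβ)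
    (hqα' : ∀ t, deriv qα t = k₁α t • hα t)
    (hhα' : ∀ t, deriv hα t = (-(k₁α t)) • qα t + k₂α t • aα t)
    (haα' : ∀ t, deriv aα t = (-(k₂α t)) • hα t)
    (hqβ' : ∀ s, deriv qβ s = k₁β s • hβ s)
    (hhβ' : ∀ s, deriv hβ s = (-(k₁β s)) • qβ s + k₂β s • aβ s)
    (haβ' : ∀ s, deriv aβ s = (-(k₂β s)) • hβ s)
    (hk₁β : ∀ s, 0 < k₁β s)
    (φ : ℝ → ℝ) (hφ : Differentiable ℝ φ)
    (htotal : ∀ s, k₁α (φ s) * deriv φ s = k₁β s)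
    (hratio : ∀ s, k₂β s / k₁β s = k₂α (φ s) / k₁α (φ s))
    (s₀ : ℝ) (hq₀ : qα (φ s₀) = qβ s₀) (hh₀ : hα (φ s₀) = hβ s₀)
    (ha₀ : aα (φ s₀) = aβ s₀) :
    ∀ s, qα (φ s) = qβ s := by
  have hk₂ : (fun s ↦ k₂α (φ s) * deriv φ s) = k₂β := funext fun s ↦
    mul_eq_of_div_eq_div_of_mul_eq (hk₁β s).ne' (htotal s) (hratio s)
  have Fα : IsRuledFrenetFrame (qα ∘ φ) (hα ∘ φ) (aα ∘ φ) k₁β k₂β := by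
    have := (IsRuledFrenetFrame.of_deriv hqα hhα haα hqα' hhα' haα').comp hφ
    rwa [funext htotal, hk₂] at this
  exact Fα.q_eq_of_eq_at (.of_deriv hqβ hhβ haβ hqβ' hhβ' haβ') hq₀ hh₀ ha₀

/-- If two ruled-surface Frenet frames have equal curvature ratios under a variable
transformation φ keeping total curvatures equal, and the frames agree at one point, then
the rulings agree everywhere: the surfaces are similar ruled surfaces under φ. -/
theorem equal_curvature_ratios_implies_similar
    (qα hα aα qβ hβ aβ : ℝ → EuclideanSpace ℝ (Fin 3)) (k₁α k₂α k₁β k₂β : ℝ → ℝ)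
    (hqα : Differentiable ℝ qα) (hhα : Differentiable ℝ hα) (haα : Differentiable ℝ aα)
    (hqβ : Differentiable ℝ qβ) (hhβ : Differentiable ℝ hβ) (haβ : Differentiable ℝ aβ)
    (hqα' : ∀ t, deriv qα t = k₁α t • hα t)
    (hhα' : ∀ t, deriv hα t = (-(k₁α t)) • qα t + k₂α t • aα t)
    (haα' : ∀ t, deriv aα t = (-(k₂α t)) • hα t)
    (hqβ' : ∀ s, deriv qβ s = k₁β s • hβ s)
    (hhβ' : ∀ s, deriv hβ s = (-(k₁β s)) • qβ s + k₂β s • aβ s)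
    (haβ' : ∀ s, deriv aβ s = (-(k₂β s)) • hβ s)
    (hk₁α : ∀ t, 0 < k₁α t) (hk₁β : ∀ s, 0 < k₁β s)
    (hk₁αc : Continuous k₁α) (hk₂αc : Continuous k₂α)
    (hk₁βc : Continuous k₁β) (hk₂βc : Continuous k₂β)
    (φ : ℝ → ℝ) (hφ : Differentiable ℝ φ)
    (htotal : ∀ s, k₁α (φ s) * deriv φ s = k₁β s)
    (hratio : ∀ s, k₂β s / k₁β s = k₂α (φ s) / k₁α (φ s))
    (s₀ : ℝ) (hq₀ : qα (φ s₀) = qβ s₀) (hh₀ : hα (φ s₀) = hβ s₀)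
    (ha₀ : aα (φ s₀) = aβ s₀) :
    ∀ s, qα (φ s) = qβ s :=
  equal_curvature_ratios_implies_similar_general qα hα aα qβ hβ aβ k₁α k₂α k₁β k₂β hqα hhα haα hqβ
    hhβ haβ hqα' hhα' haα' hqβ' hhβ' haβ' hk₁β φ hφ htotal hratio s₀ hq₀ hh₀ ha₀
end

section
/- Let (q_α, h_α, a_α, k₁^α) and (q_β, h_β, a_β, k₁^β) be the Frenet frames of two conoid ruled surfaces, i.e. q, h, a : ℝ → ℝ³ differentiable with q' = k₁ h, h' = −k₁ q (second curvature k₂ = 0), a' = 0, where k₁^α, k₁^β are positive and continuous. Let φ : ℝ → ℝ be differentiable with k₁^α(φ(s))·φ'(s) = k₁^β(s) for all s, and suppose q_α(φ(s₀)) = q_β(s₀) and h_α(φ(s₀)) = h_β(s₀) for some s₀. Then q_α(φ(s)) = q_β(s) for all s; that is, conoid surfaces form a family of similar ruled surfaces under the variable transformation keeping total curvatures equal. -/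
/-!
With `k₂ = 0` the pair `(q, h)` solves the linear system `q' = k h`, `h' = -k q`. Reparametrizing
the `α`-frame by `φ` multiplies its curvature by `φ'`, so under `k₁α ∘ φ · φ' = k₁β` both frames solve
the system with curvature `k₁β`. The difference of two solutions is again a solution, and for any
solution `‖q‖² + ‖h‖²` is constant, its derivative being `2k⟪q, h⟫ - 2k⟪h, q⟫ = 0`; a difference
vanishing at `s₀` therefore vanishes everywhere.
-/

/-- The Frenet equations of a ruled surface with `k₂ = 0`, restricted to the ruling `q` and the
central normal `h`. -/
def IsFrenetPair {E : Type*} [NormedAddCommGroup E] [NormedSpace ℝ E]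
    (k : ℝ → ℝ) (q h : ℝ → E) : Prop :=
  ∀ s, HasDerivAt q (k s • h s) s ∧ HasDerivAt h (-k s • q s) s

namespace IsFrenetPair

section Normed

variable {E : Type*} [NormedAddCommGroup E] [NormedSpace ℝ E] {k : ℝ → ℝ} {q h : ℝ → E}

theorem of_deriv (hq : Differentiable ℝ q) (hh : Differentiable ℝ h)
    (hq' : ∀ s, deriv q s = k s • h s) (hh' : ∀ s, deriv h s = -k s • q s) :
    IsFrenetPair k q h := fun s =>
  ⟨hq' s ▸ (hq s).hasDerivAt, hh' s ▸ (hh s).hasDerivAt⟩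

theorem sub {q₂ h₂ : ℝ → E} (H : IsFrenetPair k q h) (H₂ : IsFrenetPair k q₂ h₂) :
    IsFrenetPair k (q - q₂) (h - h₂) := fun s => by
  refine ⟨?_, ?_⟩
  · simpa only [Pi.sub_apply, smul_sub] using (H s).1.sub (H₂ s).1
  · simpa only [Pi.sub_apply, smul_sub] using (H s).2.sub (H₂ s).2

theorem comp {φ φ' : ℝ → ℝ} (H : IsFrenetPair k q h) (hφ : ∀ s, HasDerivAt φ (φ' s) s) :
    IsFrenetPair (fun s => k (φ s) * φ' s) (q ∘ φ) (h ∘ φ) := fun s => by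
  refine ⟨?_, ?_⟩
  · simpa only [Function.comp_apply, smul_smul, mul_comm] using (H (φ s)).1.scomp s (hφ s)
  · simpa only [Function.comp_apply, smul_smul, mul_neg, neg_mul, mul_comm] using
      (H (φ s)).2.scomp s (hφ s)

end Normed

section InnerProduct

variable {E : Type*} [NormedAddCommGroup E] [InnerProductSpace ℝ E] {k : ℝ → ℝ} {q h : ℝ → E}

theorem norm_sq_add_norm_sq_eq (H : IsFrenetPair k q h) (s t : ℝ) :
    ‖q s‖ ^ 2 + ‖h s‖ ^ 2 = ‖q t‖ ^ 2 + ‖h t‖ ^ 2 := by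
  have hE : ∀ s, HasDerivAt (fun s => ‖q s‖ ^ 2 + ‖h s‖ ^ 2) 0 s := fun s => by
    refine ((H s).1.norm_sq.add (H s).2.norm_sq).congr_deriv ?_
    rw [real_inner_smul_right, real_inner_smul_right, real_inner_comm (q s)]
    ring
  exact is_const_of_deriv_eq_zero (fun s => (hE s).differentiableAt) (fun s => (hE s).deriv) s t

theorem eq_zero_of_eq_zero_at (H : IsFrenetPair k q h) {s₀ : ℝ} (hq₀ : q s₀ = 0) (hh₀ : h s₀ = 0)
    (s : ℝ) : q s = 0 := by
  have hs := H.norm_sq_add_norm_sq_eq s s₀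
  rw [hq₀, hh₀, norm_zero, zero_pow two_ne_zero, add_zero] at hs
  simpa using ((add_eq_zero_iff_of_nonneg (sq_nonneg _) (sq_nonneg _)).mp hs).1

theorem eq_of_eq_at {q₂ h₂ : ℝ → E} (H : IsFrenetPair k q h) (H₂ : IsFrenetPair k q₂ h₂) {s₀ : ℝ}
    (hq₀ : q s₀ = q₂ s₀) (hh₀ : h s₀ = h₂ s₀) (s : ℝ) : q s = q₂ s :=
  sub_eq_zero.mp <|
    (H.sub H₂).eq_zero_of_eq_zero_at (sub_eq_zero.mpr hq₀) (sub_eq_zero.mpr hh₀) s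

end InnerProduct

end IsFrenetPair

theorem conoid_surfaces_similar_general
    (qα hα qβ hβ : ℝ → EuclideanSpace ℝ (Fin 3)) (k₁α k₁β : ℝ → ℝ)
    (hqα : Differentiable ℝ qα) (hhα : Differentiable ℝ hα)
    (hqβ : Differentiable ℝ qβ) (hhβ : Differentiable ℝ hβ)
    (hqα' : ∀ t, deriv qα t = k₁α t • hα t)
    (hhα' : ∀ t, deriv hα t = (-(k₁α t)) • qα t)
    (hqβ' : ∀ s, deriv qβ s = k₁β s • hβ s)
    (hhβ' : ∀ s, deriv hβ s = (-(k₁β s)) • qβ s)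
    (φ : ℝ → ℝ) (hφ : Differentiable ℝ φ)
    (htotal : ∀ s, k₁α (φ s) * deriv φ s = k₁β s)
    (s₀ : ℝ) (hq₀ : qα (φ s₀) = qβ s₀) (hh₀ : hα (φ s₀) = hβ s₀) :
    ∀ s, qα (φ s) = qβ s := by
  have frameα := (IsFrenetPair.of_deriv hqα hhα hqα' hhα').comp fun s => (hφ s).hasDerivAt
  rw [funext htotal] at frameα
  exact frameα.eq_of_eq_at (IsFrenetPair.of_deriv hqβ hhβ hqβ' hhβ') hq₀ hh₀

/-- Two conoid ruled surfaces (second curvature `k₂ = 0`), related by a variable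
transformation φ keeping total curvatures equal and whose frames agree at one point,
are similar ruled surfaces under φ. -/
theorem conoid_surfaces_similar
    (qα hα aα qβ hβ aβ : ℝ → EuclideanSpace ℝ (Fin 3)) (k₁α k₁β : ℝ → ℝ)
    (hqα : Differentiable ℝ qα) (hhα : Differentiable ℝ hα) (haα : Differentiable ℝ aα)
    (hqβ : Differentiable ℝ qβ) (hhβ : Differentiable ℝ hβ) (haβ : Differentiable ℝ aβ)
    (hqα' : ∀ t, deriv qα t = k₁α t • hα t)
    (hhα' : ∀ t, deriv hα t = (-(k₁α t)) • qα t)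
    (haα' : ∀ t, deriv aα t = 0)
    (hqβ' : ∀ s, deriv qβ s = k₁β s • hβ s)
    (hhβ' : ∀ s, deriv hβ s = (-(k₁β s)) • qβ s)
    (haβ' : ∀ s, deriv aβ s = 0)
    (hk₁α : ∀ t, 0 < k₁α t) (hk₁β : ∀ s, 0 < k₁β s)
    (hk₁αc : Continuous k₁α) (hk₁βc : Continuous k₁β)
    (φ : ℝ → ℝ) (hφ : Differentiable ℝ φ)
    (htotal : ∀ s, k₁α (φ s) * deriv φ s = k₁β s)
    (s₀ : ℝ) (hq₀ : qα (φ s₀) = qβ s₀) (hh₀ : hα (φ s₀) = hβ s₀) :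
    ∀ s, qα (φ s) = qβ s :=
  conoid_surfaces_similar_general qα hα qβ hβ k₁α k₁β hqα hhα hqβ hhβ hqα' hhα' hqβ' hhβ' φ hφ
    htotal s₀ hq₀ hh₀
end
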